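/- Let A and B be max-plus automata over the same finite alphabet Σ with A deterministic and f_B(v) ∈ ℕ for all words v. Let t be a factorisation tree on a word w containing a fault, let ν₁ be a fault of maximal height, ν_{h+1} the parent of ν_h for each h, and ν_m the root, and let β be the associated labelling. Then for all h ∈ {2,…,m}: bar(β(ν_h)) = α(ν_h), and writing β(ν_h) = (p,x,q,M), one has x = ∞ and M_{i,j} ≤ 1 for all (i,j) ∈ C_{ν_h}. In particular β(ν_m) is a witness of non-domination in I_{A,B}. -/

import Mathlib

open scoped Classical

/-! ### Max-plus automata -/

/-- A max-plus automaton over alphabet `Sigma` with states `Q`: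
a transition matrix for each letter, an initial row vector and a final column vector,
all with entries in `ℕmax = ℕ ∪ {-∞}`, represented as `WithBot ℕ`. -/
structure MPA (Sigma : Type) (Q : Type) where
  M : Sigma → Q → Q → WithBot ℕ
  I : Q → WithBot ℕ
  F : Q → WithBot ℕ

namespace MPA

variable {Sigma Q : Type}

/-- The matrix of a word, i.e. the product `M(w₁) ⊗ ⋯ ⊗ M(w_k)` over the
max-plus semiring. -/
def mword [Fintype Q] [DecidableEq Q] (A : MPA Sigma Q) : List Sigma → Q → Q → WithBot ℕ
  | [] => fun p q => if p = q then ((0 : ℕ) : WithBot ℕ) else ⊥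
  | a :: w => fun p q => Finset.univ.sup fun r => A.M a p r + A.mword w r q

/-- The weighting function computed by a max-plus automaton:
`f_A(w) = I ⊗ M(w) ⊗ F`. -/
def func [Fintype Q] [DecidableEq Q] (A : MPA Sigma Q) (w : List Sigma) : WithBot ℕ :=
  Finset.univ.sup fun p => Finset.univ.sup fun q => A.I p + A.mword w p q + A.F q

/-- `A` is deterministic: at most one non-`-∞` entry in `I`,
and at most one non-`-∞` entry in each row of each `M(a)`. -/
def Deterministic (A : MPA Sigma Q) : Prop :=
  (∀ p q, A.I p ≠ ⊥ → A.I q ≠ ⊥ → p = q) ∧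
    ∀ a p q r, A.M a p q ≠ ⊥ → A.M a p r ≠ ⊥ → q = r

end MPA

/-- `A` is big-O of `B`: there is `c ≥ 1` with `f_A(w) ≤ c·f_B(w) + c` for all `w`. -/
def BigO {Sigma Q1 Q2 : Type} [Fintype Q1] [DecidableEq Q1] [Fintype Q2] [DecidableEq Q2]
    (A : MPA Sigma Q1) (B : MPA Sigma Q2) : Prop :=
  ∃ c : ℕ, 1 ≤ c ∧ ∀ w : List Sigma, A.func w ≤ c • B.func w + (c : WithBot ℕ)

/-! ### The semiring Ω = {-∞, 0, 1, ∞} -/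

/-- The four-element semiring `Ω = ({-∞,0,1,∞}, max, +)`. -/
inductive OSR : Type
  | bot | zero | one | inf
  deriving DecidableEq

namespace OSR

def rank : OSR → ℕ
  | bot => 0 | zero => 1 | one => 2 | inf => 3

instance : LE OSR := ⟨fun a b => a.rank ≤ b.rank⟩
instance : LT OSR := ⟨fun a b => a.rank < b.rank⟩

/-- The max operation of `Ω`, given by the order `-∞ < 0 < 1 < ∞`. -/
def sup (a b : OSR) : OSR := if a.rank ≤ b.rank then b else a

/-- The sum operation of `Ω`. -/
def add : OSR → OSR → OSR
  | bot, _ => bot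
  | _, bot => bot
  | zero, x => x
  | x, zero => x
  | one, one => one
  | one, inf => inf
  | inf, one => inf
  | inf, inf => inf

/-- Stabilisation on `Ω`. -/
def sharp : OSR → OSR
  | bot => bot | zero => zero | one => inf | inf => inf

/-- Projection into `Ω̄ = {-∞,0,1}`. -/
def bar : OSR → OSR
  | bot => bot | zero => zero | one => one | inf => one

end OSR

/-- Max of a finite family in `Ω`. -/
def osum {n : ℕ} (f : Fin n → OSR) : OSR :=
  (List.finRange n).foldr (fun j acc => OSR.sup (f j) acc) OSR.bot

/-- Product of matrices over `Ω`. -/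
def omul {n : ℕ} (M N : Fin n → Fin n → OSR) : Fin n → Fin n → OSR :=
  fun i k => osum fun j => OSR.add (M i j) (N j k)

/-- Entrywise projection of a matrix into `Ω̄`. -/
def obar {n : ℕ} (M : Fin n → Fin n → OSR) : Fin n → Fin n → OSR :=
  fun i j => (M i j).bar

/-- Projection of `ℕmax` into `Ω̄ ⊆ Ω`: `-∞ ↦ -∞`, `0 ↦ 0`, positive ↦ `1`. -/
def barW (x : WithBot ℕ) : OSR :=
  WithBot.recBotCoe OSR.bot (fun n => if n = 0 then OSR.zero else OSR.one) x

/-- Projection of `ℕ` into `Ω̄`. -/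
def barNat (n : ℕ) : OSR := if n = 0 then OSR.zero else OSR.one

/-! ### The semigroups `I_{Q,i}` and their operations -/

/-- A (non-`⊥`) element `(p, x, q, M)` of the semigroup `I_{Q,n}`. -/
structure Elem (QA : Type) (n : ℕ) where
  p : QA
  x : OSR
  q : QA
  M : Fin n → Fin n → OSR

/-- Product of two elements (assuming endpoint compatibility). -/
def eprod {QA : Type} {n : ℕ} (e f : Elem QA n) : Elem QA n :=
  ⟨e.p, e.x.add f.x, f.q, omul e.M f.M⟩

/-- The product in `I_{Q,n}` with `⊥` (`none` is `⊥`). -/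
def omulO {QA : Type} {n : ℕ} [DecidableEq QA] :
    Option (Elem QA n) → Option (Elem QA n) → Option (Elem QA n)
  | some e, some f => if e.q = f.p then some (eprod e f) else none
  | _, _ => none

/-- `(p,x,q,M)` is path-idempotent: `p = q` and `bar(M)` is idempotent. -/
def pathIdem {QA : Type} {n : ℕ} (e : Elem QA n) : Prop :=
  e.p = e.q ∧ omul (obar e.M) (obar e.M) = obar e.M

/-- `M` with all diagonal entries replaced by their stabilisation. -/
def mdiagSharp {n : ℕ} (M : Fin n → Fin n → OSR) : Fin n → Fin n → OSR :=
  fun i j => if i = j then (M i j).sharp else M i j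

/-- Stabilisation of a (path-idempotent) matrix: `M^# = M ⊗ M' ⊗ M`. -/
def mstab {n : ℕ} (M : Fin n → Fin n → OSR) : Fin n → Fin n → OSR :=
  omul (omul M (mdiagSharp M)) M

/-- Stabilisation of a (path-idempotent) element. -/
def estab {QA : Type} {n : ℕ} (e : Elem QA n) : Elem QA n :=
  ⟨e.p, e.x.sharp, e.p, mstab e.M⟩

/-- `⟨N⟩`: all off-diagonal entries replaced by their bar. -/
def mangle {n : ℕ} (M : Fin n → Fin n → OSR) : Fin n → Fin n → OSR :=
  fun i j => if i = j then M i j else (M i j).bar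

/-- Flattening of a (path-idempotent) matrix: `M^♭ = bar(M) ⊗ ⟨M³⟩ ⊗ bar(M)`. -/
def mflat {n : ℕ} (M : Fin n → Fin n → OSR) : Fin n → Fin n → OSR :=
  omul (obar M) (omul (mangle (omul M (omul M M))) (obar M))

/-- Flattening of a (path-idempotent) element. -/
def eflat {QA : Type} {n : ℕ} (e : Elem QA n) : Elem QA n :=
  ⟨e.p, e.x, e.p, mflat e.M⟩

/-- Componentwise projection of an element to `Ω̄`. -/
def ebar {QA : Type} {n : ℕ} (e : Elem QA n) : Elem QA n :=
  ⟨e.p, e.x.bar, e.q, obar e.M⟩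

/-! ### Semigroup of paths and of asymptotic behaviours -/

/-- Generators: `(p, bar x, q, bar (M_B(a)))` for each transition `p →^{a:x} q` of `A`
with `x ≠ -∞`. -/
def IsGen {Sigma QA : Type} {nB : ℕ} (A : MPA Sigma QA) (B : MPA Sigma (Fin nB))
    (e : Elem QA nB) : Prop :=
  ∃ (a : Sigma) (p q : QA) (x : ℕ), A.M a p q = ((x : ℕ) : WithBot ℕ) ∧
    e = ⟨p, barNat x, q, fun i j => barW (B.M a i j)⟩

/-- The semigroup of paths `S̄_{A,B}` (as a subset of `Ī_{Q_A,|Q_B|}`, including `⊥`):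
generated by the generators under the product. -/
inductive InPathsO {Sigma QA : Type} {nB : ℕ} [DecidableEq QA]
    (A : MPA Sigma QA) (B : MPA Sigma (Fin nB)) : Option (Elem QA nB) → Prop
  | gen : ∀ e, IsGen A B e → InPathsO A B (some e)
  | mul : ∀ x y, InPathsO A B x → InPathsO A B y → InPathsO A B (omulO x y)

/-- The semigroup of asymptotic behaviours `I_{A,B}`: generated by the generators and
closed under product, stabilisation and flattening. -/
inductive InAsympO {Sigma QA : Type} {nB : ℕ} [DecidableEq QA]
    (A : MPA Sigma QA) (B : MPA Sigma (Fin nB)) : Option (Elem QA nB) → Prop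
  | gen : ∀ e, IsGen A B e → InAsympO A B (some e)
  | mul : ∀ x y, InAsympO A B x → InAsympO A B y → InAsympO A B (omulO x y)
  | stab : ∀ e, InAsympO A B (some e) → pathIdem e → InAsympO A B (some (estab e))
  | flat : ∀ e, InAsympO A B (some e) → pathIdem e → InAsympO A B (some (eflat e))

/-- The cardinality `|S̄_{A,B}|` of the semigroup of paths. -/
noncomputable def sizeS {Sigma QA : Type} {nB : ℕ} [DecidableEq QA]
    (A : MPA Sigma QA) (B : MPA Sigma (Fin nB)) : ℕ :=
  Set.ncard {x : Option (Elem QA nB) | InPathsO A B x}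

/-- `(p,x,q,M)` is a witness of non-domination: `p` initial in `A`, `q` final in `A`,
`x = ∞` and `bar(I_B) ⊗ M ⊗ bar(F_B) < ∞`. -/
def IsWitness {Sigma QA : Type} {nB : ℕ} (A : MPA Sigma QA) (B : MPA Sigma (Fin nB))
    (e : Elem QA nB) : Prop :=
  A.I e.p ≠ ⊥ ∧ A.F e.q ≠ ⊥ ∧ e.x = OSR.inf ∧
    osum (fun i => osum fun j =>
      OSR.add (barW (B.I i)) (OSR.add (e.M i j) (barW (B.F j)))) ≠ OSR.inf

/-! ### Tractable witnesses -/

/-- Membership of an extended element (`none` is the adjoined identity `𝟙`) in `S̄_{A,B}`. -/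
def InPathsOpt {Sigma QA : Type} {nB : ℕ} [DecidableEq QA]
    (A : MPA Sigma QA) (B : MPA Sigma (Fin nB)) : Option (Elem QA nB) → Prop
  | none => True
  | some e => InPathsO A B (some e)

/-- `g ⊗ e ⊗ g'` where `g, g'` may be the adjoined identity `𝟙` (i.e. `none`). -/
def extWrap {QA : Type} {n : ℕ} (g : Option (Elem QA n)) (e : Elem QA n)
    (g' : Option (Elem QA n)) : Elem QA n :=
  match g, g' with
  | none, none => e
  | some a, none => eprod a e
  | none, some b => eprod e b
  | some a, some b => eprod a (eprod e b)

/-- `TractCore A B k e`: `e` has the form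
`(g_1 (⋯ (g_{k-1} (g_k)^# g'_{k-1})^♭ ⋯)^♭ g'_1)^♭` with `k` flattenings, built from
elements of `S̄_{A,B} ∪ {𝟙}`. -/
inductive TractCore {Sigma QA : Type} {nB : ℕ} [DecidableEq QA]
    (A : MPA Sigma QA) (B : MPA Sigma (Fin nB)) : ℕ → Elem QA nB → Prop
  | base : ∀ e, InPathsO A B (some e) → pathIdem e → TractCore A B 0 (estab e)
  | step : ∀ k e g g', TractCore A B k e →
      InPathsOpt A B g → InPathsOpt A B g' →
      (∀ a, g = some a → a.q = e.p) → (∀ b, g' = some b → e.q = b.p) →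
      pathIdem (extWrap g e g') →
      TractCore A B (k + 1) (eflat (extWrap g e g'))

/-- A tractable witness of non-domination. -/
def IsTractableWitness {Sigma QA : Type} {nB : ℕ} [DecidableEq QA]
    (A : MPA Sigma QA) (B : MPA Sigma (Fin nB)) (wit : Elem QA nB) : Prop :=
  IsWitness A B wit ∧
    ∃ (m : ℕ) (e : Elem QA nB) (g g' : Option (Elem QA nB)),
      m + 1 ≤ 3 * sizeS A B ∧
      TractCore A B m e ∧ InPathsOpt A B g ∧ InPathsOpt A B g' ∧
      (∀ a, g = some a → a.q = e.p) ∧ (∀ b, g' = some b → e.q = b.p) ∧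
      wit = extWrap g e g'

/-! ### Factorisation trees -/

/-- Finite ordered trees labelled by elements of `Ī_{Q_A,|Q_B|}`. -/
inductive FT (QA : Type) (n : ℕ) : Type
  | leaf : Elem QA n → FT QA n
  | node : Elem QA n → List (FT QA n) → FT QA n

namespace FT

variable {QA : Type} {n : ℕ}

/-- The label of the root of a tree. -/
def label : FT QA n → Elem QA n
  | leaf e => e
  | node e _ => e

mutual
  /-- The list of leaf labels of a tree, in order. -/
  def leaves : FT QA n → List (Elem QA n)
    | .leaf e => [e]
    | .node _ cs => leavesList cs
  def leavesList : List (FT QA n) → List (Elem QA n)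
    | [] => []
    | t :: ts => leaves t ++ leavesList ts
end

mutual
  /-- Height of a tree: leaves have height `0`. -/
  def height : FT QA n → ℕ
    | .leaf _ => 0
    | .node _ cs => heightList cs + 1
  def heightList : List (FT QA n) → ℕ
    | [] => 0
    | t :: ts => max (height t) (heightList ts)
end

/-- The `i`-th child. -/
def childAt : FT QA n → ℕ → Option (FT QA n)
  | leaf _, _ => none
  | node _ cs, i => cs[i]?

/-- The subtree at a path (a list of child indices from the root). -/
def subtreeAt : FT QA n → List ℕ → Option (FT QA n)
  | t, [] => some t
  | t, i :: rest => (t.childAt i).bind fun c => subtreeAt c rest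

/-- Well-formed factorisation trees: internal nodes have ≥ 2 children, are labelled by the
product of the children's labels (with compatible endpoints), and nodes with ≥ 3 children
are idempotent nodes: all children and the node itself carry one same idempotent label. -/
inductive WF : FT QA n → Prop
  | leaf : ∀ e, WF (FT.leaf e)
  | node : ∀ (lbl : Elem QA n) (cs : List (FT QA n)),
      2 ≤ cs.length →
      (∀ c ∈ cs, WF c) →
      List.Chain' (fun a b => a.q = b.p) (cs.map FT.label) →
      (∀ h t, cs.map FT.label = h :: t → lbl = t.foldl eprod h) →
      (3 ≤ cs.length → lbl.p = lbl.q ∧ eprod lbl lbl = lbl ∧ ∀ c ∈ cs, FT.label c = lbl) →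
      WF (FT.node lbl cs)

end FT

/-- One top-down step of the computation of contributors: from the contributor set `C` of a
node with children `cs`, the contributor set of the `i`-th child. -/
def contribStep {QA : Type} {n : ℕ} (cs : List (FT QA n)) (C : Set (Fin n × Fin n)) (i : ℕ) :
    Set (Fin n × Fin n) :=
  match cs with
  | [c1, c2] =>
      let M := (FT.label c1).M
      let P := (FT.label c2).M
      if i = 0 then
        {il | ∃ j, (il.1, j) ∈ C ∧ P il.2 j ≠ OSR.bot ∧ M il.1 il.2 ≠ OSR.bot}
      else
        {lj | ∃ a, (a, lj.2) ∈ C ∧ M a lj.1 ≠ OSR.bot ∧ P lj.1 lj.2 ≠ OSR.bot}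
  | c :: _ :: _ :: _ =>
      let M := (FT.label c).M
      if i = 0 then
        {il | ∃ j, (il.1, j) ∈ C ∧ M il.2 j ≠ OSR.bot ∧ M il.1 il.2 ≠ OSR.bot}
      else if i = cs.length - 1 then
        {lj | ∃ a, (a, lj.2) ∈ C ∧ M a lj.1 ≠ OSR.bot ∧ M lj.1 lj.2 ≠ OSR.bot}
      else
        {lk | ∃ a b, (a, b) ∈ C ∧ M a lk.1 ≠ OSR.bot ∧ M lk.2 b ≠ OSR.bot ∧
              M lk.1 lk.2 ≠ OSR.bot ∧ M lk.2 lk.1 ≠ OSR.bot}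
  | _ => ∅

/-- Contributor set of the node at path `π`, starting from the set `C` at the root. -/
def contribAt {QA : Type} {n : ℕ} : FT QA n → Set (Fin n × Fin n) → List ℕ → Set (Fin n × Fin n)
  | _, C, [] => C
  | FT.leaf _, _, _ :: _ => ∅
  | FT.node _ cs, C, i :: rest =>
      match cs[i]? with
      | none => ∅
      | some c => contribAt c (contribStep cs C i) rest

/-- The contributor set of the root: pairs `(i,j)` with `i` initial in `B`, `j` final in `B`
and `M_{i,j} ≠ -∞`. -/
def rootContrib {Sigma QA : Type} {n : ℕ} (B : MPA Sigma (Fin n)) (t : FT QA n) :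
    Set (Fin n × Fin n) :=
  {ij | B.I ij.1 ≠ ⊥ ∧ B.F ij.2 ≠ ⊥ ∧ (FT.label t).M ij.1 ij.2 ≠ OSR.bot}

/-- The contributor set of the node at path `π` of the tree `t`. -/
def contributors {Sigma QA : Type} {n : ℕ} (B : MPA Sigma (Fin n)) (t : FT QA n)
    (π : List ℕ) : Set (Fin n × Fin n) :=
  contribAt t (rootContrib B t) π

/-- `PathLeaves A B p w xs ls q`: `ls` is the list `α_w(w₁), …, α_w(w_k)` associated with the
run of `A` on `w` from `p` to `q` with transition weights `xs`. -/
def PathLeaves {Sigma QA : Type} {nB : ℕ} (A : MPA Sigma QA) (B : MPA Sigma (Fin nB)) :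
    QA → List Sigma → List ℕ → List (Elem QA nB) → QA → Prop
  | p, [], [], [], q => p = q
  | p, a :: w, x :: xs, e :: ls, q =>
      e.p = p ∧ A.M a p e.q = ((x : ℕ) : WithBot ℕ) ∧ e.x = barNat x ∧
      (e.M = fun i j => barW (B.M a i j)) ∧ PathLeaves A B e.q w xs ls q
  | _, _, _, _, _ => False

/-- `t` is a factorisation tree on the word `w` (for the accepting run of `A` on `w`). -/
def IsFactTreeOn {Sigma QA : Type} {nB : ℕ} [Fintype QA] [DecidableEq QA]
    (A : MPA Sigma QA) (B : MPA Sigma (Fin nB)) (w : List Sigma) (t : FT QA nB) : Prop :=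
  FT.WF t ∧ ∃ (p q : QA) (xs : List ℕ),
    A.I p ≠ ⊥ ∧ A.F q ≠ ⊥ ∧ PathLeaves A B p w xs (FT.leaves t) q

/-- The node of `t` at path `π` is a fault. -/
def IsFaultAt {Sigma QA : Type} {nB : ℕ} (B : MPA Sigma (Fin nB)) (t : FT QA nB)
    (π : List ℕ) : Prop :=
  ∃ σ i, π = σ ++ [i] ∧
    ∃ lbl cs, FT.subtreeAt t σ = some (FT.node lbl cs) ∧ 3 ≤ cs.length ∧
      0 < i ∧ i < cs.length - 1 ∧
      ∃ c, cs[i]? = some c ∧ (FT.label c).x = OSR.one ∧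
        ∀ ij ∈ contributors B t π, (FT.label c).M ij.1 ij.2 = OSR.zero

/-- Number of leaves strictly to the left of the node at path `π`. -/
def offsetAt {QA : Type} {n : ℕ} : FT QA n → List ℕ → ℕ
  | _, [] => 0
  | FT.leaf _, _ :: _ => 0
  | FT.node _ cs, i :: rest =>
      ((cs.take i).map fun c => (FT.leaves c).length).sum +
        match cs[i]? with
        | none => 0
        | some c => offsetAt c rest

/-- Height of the node at path `π`. -/
def heightAt {QA : Type} {n : ℕ} (t : FT QA n) (π : List ℕ) : ℕ :=
  match FT.subtreeAt t π with
  | some c => FT.height c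
  | none => 0

/-- The β-labelling: `beta t π` is the β-label of the root of `t`, where `π` is the path
from the root of `t` down to the fault `ν₁`. -/
def beta {QA : Type} {n : ℕ} : FT QA n → List ℕ → Elem QA n
  | t, [] => FT.label t
  | FT.leaf e, _ :: _ => e
  | FT.node lbl cs, i :: rest =>
      match cs[i]? with
      | none => lbl
      | some c =>
        match rest with
        | [] => estab (FT.label c)
        | j :: rest' =>
          let inner := beta c (j :: rest')
          if cs.length = 2 then
            (if i = 0 then eprod inner ((cs[1]?.map FT.label).getD lbl)
             else eprod ((cs[0]?.map FT.label).getD lbl) inner)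
          else
            if i = 0 then eprod inner (FT.label c)
            else if i = cs.length - 1 then eprod (FT.label c) inner
            else eflat inner


/-!
Walking up from the fault, `β(ν)` stays a lift of `α(ν)` whose weight is `∞` while its matrix
stays at most `1` on the contributors of `ν`. At the fault, stabilisation turns the weight `1`
into `∞`, and since the fault's matrix vanishes on the contributors of the middle child, the
diagonal entries that the stabilisation pumps are `0` wherever they could reach a contributor.
Each contributor set is exactly the set of index pairs through which the parent's contributors
are reached, so the bound survives products with the (barred) siblings' labels and flattening.
At the root the contributors are the pairs of initial and final states of `B`, whence
`bar(I_B) ⊗ M ⊗ bar(F_B) < ∞`.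
-/

namespace OSR

instance : Fintype OSR where
  elems := {bot, zero, one, inf}
  complete := by intro x; cases x <;> decide

instance : DecidableRel (α := OSR) (· ≤ ·) :=
  fun a b => inferInstanceAs (Decidable (a.rank ≤ b.rank))

protected theorem le_trans : ∀ {a b c : OSR}, a ≤ b → b ≤ c → a ≤ c := by decide
protected theorem bot_le : ∀ a : OSR, bot ≤ a := by decide
protected theorem sup_le : ∀ {a b c : OSR}, a ≤ c → b ≤ c → sup a b ≤ c := by decide
protected theorem le_sup_left : ∀ a b : OSR, a ≤ sup a b := by decide
protected theorem le_sup_right : ∀ a b : OSR, b ≤ sup a b := by decide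
theorem ne_bot_of_le : ∀ {a b : OSR}, a ≤ b → a ≠ bot → b ≠ bot := by decide
theorem eq_bot_of_le_bot : ∀ {a : OSR}, a ≤ bot → a = bot := by decide
theorem ne_inf_of_le_one : ∀ {a : OSR}, a ≤ one → a ≠ inf := by decide

theorem bar_add : ∀ a b : OSR, (add a b).bar = add a.bar b.bar := by decide
theorem bar_sup : ∀ a b : OSR, (sup a b).bar = sup a.bar b.bar := by decide
theorem bar_sharp : ∀ a : OSR, a.sharp.bar = a.bar := by decide
theorem bar_bar : ∀ a : OSR, a.bar.bar = a.bar := by decide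
theorem bar_le_one : ∀ a : OSR, a.bar ≤ one := by decide
theorem le_one_of_bar_eq : ∀ {a : OSR}, a.bar = a → a ≤ one := by decide
theorem bar_ne_bot_iff : ∀ {a : OSR}, a.bar ≠ bot ↔ a ≠ bot := by decide
theorem sharp_ne_bot_iff : ∀ {a : OSR}, a.sharp ≠ bot ↔ a ≠ bot := by decide

theorem add_ne_bot : ∀ {a b : OSR}, a ≠ bot → b ≠ bot → add a b ≠ bot := by decide
theorem inf_add : ∀ {a : OSR}, a ≠ bot → add inf a = inf := by decide
theorem add_inf : ∀ {a : OSR}, a ≠ bot → add a inf = inf := by decide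
theorem add_le_bot : ∀ {a b : OSR}, (a ≠ bot → b = bot) → add a b ≤ bot := by decide
theorem add_le_one : ∀ {a b : OSR}, (a ≠ bot → b ≠ bot → a ≤ one ∧ b ≤ one) →
    add a b ≤ one := by decide
theorem add_add_le_one : ∀ {a b c : OSR}, a ≤ one → c ≤ one →
    (a ≠ bot → b ≠ bot → c ≠ bot → b ≤ one) → add a (add b c) ≤ one := by
  intro a b c; cases a <;> cases b <;> cases c <;> decide

end OSR

section Osum

variable {ι : Type*} {n : ℕ}

theorem foldr_sup_le (f : ι → OSR) {c : OSR} :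
    ∀ {l : List ι}, (∀ j ∈ l, f j ≤ c) → l.foldr (fun j acc => (f j).sup acc) OSR.bot ≤ c
  | [], _ => OSR.bot_le c
  | _ :: _, h => OSR.sup_le (h _ List.mem_cons_self)
      (foldr_sup_le f fun j hj => h j (List.mem_cons_of_mem _ hj))

theorem le_foldr_sup (f : ι → OSR) {j : ι} :
    ∀ {l : List ι}, j ∈ l → f j ≤ l.foldr (fun j acc => (f j).sup acc) OSR.bot
  | _ :: _, List.Mem.head _ => OSR.le_sup_left _ _
  | _ :: _, List.Mem.tail _ h => OSR.le_trans (le_foldr_sup f h) (OSR.le_sup_right _ _)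

theorem bar_foldr_sup (f : ι → OSR) : ∀ l : List ι,
    (l.foldr (fun j acc => (f j).sup acc) OSR.bot).bar =
      l.foldr (fun j acc => (f j).bar.sup acc) OSR.bot
  | [] => rfl
  | _ :: l => by simp only [List.foldr_cons, OSR.bar_sup, bar_foldr_sup f l]

theorem osum_le {f : Fin n → OSR} {c : OSR} (h : ∀ j, f j ≤ c) : osum f ≤ c :=
  foldr_sup_le f fun j _ => h j

theorem le_osum (f : Fin n → OSR) (j : Fin n) : f j ≤ osum f :=
  le_foldr_sup f (List.mem_finRange j)

theorem bar_osum (f : Fin n → OSR) : (osum f).bar = osum fun j => (f j).bar :=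
  bar_foldr_sup f _

end Osum

section Matrix

variable {n : ℕ} {M N : Fin n → Fin n → OSR}

theorem omul_le_one {i k : Fin n}
    (h : ∀ j, M i j ≠ OSR.bot → N j k ≠ OSR.bot → M i j ≤ OSR.one ∧ N j k ≤ OSR.one) :
    omul M N i k ≤ OSR.one :=
  osum_le fun j => OSR.add_le_one (h j)

theorem omul_ne_bot {i j k : Fin n} (h₁ : M i j ≠ OSR.bot) (h₂ : N j k ≠ OSR.bot) :
    omul M N i k ≠ OSR.bot :=
  OSR.ne_bot_of_le (le_osum _ j) (OSR.add_ne_bot h₁ h₂)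

theorem exists_of_omul_ne_bot {i k : Fin n} (h : omul M N i k ≠ OSR.bot) :
    ∃ j, M i j ≠ OSR.bot ∧ N j k ≠ OSR.bot := by
  by_contra! h'
  exact h (OSR.eq_bot_of_le_bot (osum_le fun j => OSR.add_le_bot (h' j)))

theorem ne_bot_trans (hM : omul M M = M) {x y z : Fin n} (h₁ : M x y ≠ OSR.bot)
    (h₂ : M y z ≠ OSR.bot) : M x z ≠ OSR.bot :=
  hM ▸ omul_ne_bot h₁ h₂

theorem obar_omul (M N : Fin n → Fin n → OSR) : obar (omul M N) = omul (obar M) (obar N) := by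
  funext i k
  simp only [obar, omul, bar_osum, OSR.bar_add]

theorem obar_obar (M : Fin n → Fin n → OSR) : obar (obar M) = obar M :=
  funext fun _ => funext fun _ => OSR.bar_bar _

theorem obar_mdiagSharp (M : Fin n → Fin n → OSR) : obar (mdiagSharp M) = obar M := by
  funext i j
  simp only [obar, mdiagSharp]
  split_ifs
  · exact OSR.bar_sharp _
  · rfl

theorem obar_mangle (M : Fin n → Fin n → OSR) : obar (mangle M) = obar M := by
  funext i j
  simp only [obar, mangle]
  split_ifs
  · rfl
  · exact OSR.bar_bar _

theorem obar_mstab (h : omul (obar M) (obar M) = obar M) : obar (mstab M) = obar M := by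
  simp only [mstab, obar_omul, obar_mdiagSharp, h]

theorem obar_mflat (h : omul (obar M) (obar M) = obar M) : obar (mflat M) = obar M := by
  simp only [mflat, obar_omul, obar_mangle, obar_obar, h]

theorem ne_bot_iff_of_obar_eq (h : obar N = M) {i j : Fin n} :
    N i j ≠ OSR.bot ↔ M i j ≠ OSR.bot := by
  rw [← h]
  exact OSR.bar_ne_bot_iff.symm

theorem le_one_of_obar_eq (h : obar M = M) (i j : Fin n) : M i j ≤ OSR.one :=
  OSR.le_one_of_bar_eq (congrFun (congrFun h i) j)

end Matrix

section Contributors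

variable {n : ℕ} {M N P : Fin n → Fin n → OSR} {C : Set (Fin n × Fin n)}

def leftContrib (C : Set (Fin n × Fin n)) (M P : Fin n → Fin n → OSR) : Set (Fin n × Fin n) :=
  {il | ∃ j, (il.1, j) ∈ C ∧ P il.2 j ≠ OSR.bot ∧ M il.1 il.2 ≠ OSR.bot}

def rightContrib (C : Set (Fin n × Fin n)) (M P : Fin n → Fin n → OSR) : Set (Fin n × Fin n) :=
  {lj | ∃ a, (a, lj.2) ∈ C ∧ M a lj.1 ≠ OSR.bot ∧ P lj.1 lj.2 ≠ OSR.bot}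

def midContrib (C : Set (Fin n × Fin n)) (M : Fin n → Fin n → OSR) : Set (Fin n × Fin n) :=
  {lk | ∃ a b, (a, b) ∈ C ∧ M a lk.1 ≠ OSR.bot ∧ M lk.2 b ≠ OSR.bot ∧
    M lk.1 lk.2 ≠ OSR.bot ∧ M lk.2 lk.1 ≠ OSR.bot}

theorem omul_le_one_of_leftContrib (hN : obar N = M) (hP : obar P = P)
    (hle : ∀ ij ∈ leftContrib C M P, N ij.1 ij.2 ≤ OSR.one) :
    ∀ ij ∈ C, omul N P ij.1 ij.2 ≤ OSR.one := by
  rintro ⟨a, b⟩ hab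
  exact omul_le_one fun ℓ haℓ hℓb =>
    ⟨hle (a, ℓ) ⟨b, hab, hℓb, (ne_bot_iff_of_obar_eq hN).1 haℓ⟩, le_one_of_obar_eq hP ℓ b⟩

theorem omul_le_one_of_rightContrib (hN : obar N = M) (hP : obar P = P)
    (hle : ∀ ij ∈ rightContrib C P M, N ij.1 ij.2 ≤ OSR.one) :
    ∀ ij ∈ C, omul P N ij.1 ij.2 ≤ OSR.one := by
  rintro ⟨a, b⟩ hab
  exact omul_le_one fun ℓ haℓ hℓb =>
    ⟨le_one_of_obar_eq hP a ℓ, hle (ℓ, b) ⟨a, hab, haℓ, (ne_bot_iff_of_obar_eq hN).1 hℓb⟩⟩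

theorem mstab_le_one (hM : obar M = M) (hz : ∀ ij ∈ midContrib C M, M ij.1 ij.2 = OSR.zero) :
    ∀ ij ∈ C, mstab M ij.1 ij.2 ≤ OSR.one := by
  rintro ⟨a, b⟩ hab
  refine omul_le_one fun k _ hkb =>
    ⟨omul_le_one fun ℓ haℓ hℓk => ⟨le_one_of_obar_eq hM a ℓ, ?_⟩, le_one_of_obar_eq hM k b⟩
  by_cases hk : ℓ = k
  · subst hk
    simp only [mdiagSharp] at hℓk ⊢
    have hℓℓ := OSR.sharp_ne_bot_iff.1 hℓk
    rw [hz (ℓ, ℓ) ⟨a, b, hab, haℓ, hkb, hℓℓ, hℓℓ⟩]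
    decide
  · simp only [mdiagSharp, if_neg hk]
    exact le_one_of_obar_eq hM ℓ k

/-- Every index met along a cycle of `N³` through `ℓ` lies in the strongly connected component
of `ℓ` in the support of the idempotent `M`, so each factor is indexed by `midContrib C M`. -/
theorem omul_omul_diag_le_one (hN : obar N = M) (hM : omul M M = M)
    (hle : ∀ ij ∈ midContrib C M, N ij.1 ij.2 ≤ OSR.one) {a b ℓ : Fin n} (hab : (a, b) ∈ C)
    (haℓ : M a ℓ ≠ OSR.bot) (hℓb : M ℓ b ≠ OSR.bot) : omul N (omul N N) ℓ ℓ ≤ OSR.one := by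
  have hNM {x y : Fin n} : N x y ≠ OSR.bot → M x y ≠ OSR.bot := (ne_bot_iff_of_obar_eq hN).1
  have hscc : ∀ x y, M ℓ x ≠ OSR.bot → M x ℓ ≠ OSR.bot → M y ℓ ≠ OSR.bot →
      N x y ≠ OSR.bot → N x y ≤ OSR.one := fun x y hℓx hxℓ hyℓ hxy =>
    hle (x, y) ⟨a, b, hab, ne_bot_trans hM haℓ hℓx, ne_bot_trans hM hyℓ hℓb, hNM hxy,
      ne_bot_trans hM hyℓ hℓx⟩
  refine omul_le_one fun u hℓu huℓ => ?_
  obtain ⟨v, huv, hvℓ⟩ := exists_of_omul_ne_bot huℓ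
  have huℓ' : M u ℓ ≠ OSR.bot := ne_bot_trans hM (hNM huv) (hNM hvℓ)
  have hℓℓ : M ℓ ℓ ≠ OSR.bot := ne_bot_trans hM (hNM hℓu) huℓ'
  refine ⟨hscc ℓ u hℓℓ hℓℓ huℓ' hℓu,
    omul_le_one fun v' huv' hv'ℓ => ⟨hscc u v' (hNM hℓu) huℓ' (hNM hv'ℓ) huv', ?_⟩⟩
  exact hscc v' ℓ (ne_bot_trans hM (hNM hℓu) (hNM huv')) (hNM hv'ℓ) hℓℓ hv'ℓ

theorem mflat_le_one (hN : obar N = M) (hM : omul M M = M)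
    (hle : ∀ ij ∈ midContrib C M, N ij.1 ij.2 ≤ OSR.one) :
    ∀ ij ∈ C, mflat N ij.1 ij.2 ≤ OSR.one := by
  rintro ⟨a, b⟩ hab
  have hMbar : obar M = M := hN ▸ obar_obar N
  simp only [mflat, hN]
  refine omul_le_one fun ℓ haℓ _ => ⟨le_one_of_obar_eq hMbar a ℓ,
    omul_le_one fun k _ hkb => ⟨?_, le_one_of_obar_eq hMbar k b⟩⟩
  by_cases hk : ℓ = k
  · subst hk
    simp only [mangle]
    exact omul_omul_diag_le_one hN hM hle hab haℓ hkb
  · simp only [mangle, if_neg hk]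
    exact OSR.bar_le_one _

end Contributors

section Elements

variable {Sigma QA : Type} {n : ℕ}

structure Elem.IsBarred (e : Elem QA n) : Prop where
  bar_x : e.x.bar = e.x
  x_ne_bot : e.x ≠ OSR.bot
  obar_M : obar e.M = e.M

theorem Elem.IsBarred.ebar_eq {e : Elem QA n} (h : e.IsBarred) : ebar e = e := by
  obtain ⟨p, x, q, M⟩ := e
  simp only [ebar, h.bar_x, h.obar_M]

theorem Elem.IsBarred.eprod {e f : Elem QA n} (he : e.IsBarred) (hf : f.IsBarred) :
    (eprod e f).IsBarred where
  bar_x := by simp only [_root_.eprod, OSR.bar_add, he.bar_x, hf.bar_x]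
  x_ne_bot := OSR.add_ne_bot he.x_ne_bot hf.x_ne_bot
  obar_M := by simp only [_root_.eprod, obar_omul, he.obar_M, hf.obar_M]

theorem ebar_eprod (e f : Elem QA n) : ebar (eprod e f) = eprod (ebar e) (ebar f) := by
  simp only [ebar, eprod, OSR.bar_add, obar_omul]

theorem barW_bar (y : WithBot ℕ) : (barW y).bar = barW y := by
  cases y with
  | bot => rfl
  | coe m => simp only [barW, WithBot.recBotCoe]; split <;> rfl

theorem barW_ne_bot_iff {y : WithBot ℕ} : barW y ≠ OSR.bot ↔ y ≠ ⊥ := by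
  cases y with
  | bot => simp [barW, WithBot.recBotCoe]
  | coe m => simp only [barW, WithBot.recBotCoe]; split <;> simp

theorem IsGen.isBarred {A : MPA Sigma QA} {B : MPA Sigma (Fin n)} {e : Elem QA n}
    (h : IsGen A B e) : e.IsBarred := by
  obtain ⟨a, p, q, x, -, rfl⟩ := h
  refine ⟨?_, ?_, funext fun i => funext fun j => barW_bar _⟩ <;>
    simp only [barNat] <;> split <;> decide

variable [DecidableEq QA] {A : MPA Sigma QA} {B : MPA Sigma (Fin n)}

theorem omulO_some_some {e f : Elem QA n} (h : e.q = f.p) :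
    omulO (some e) (some f) = some (eprod e f) := by
  simp [omulO, h]

theorem InPathsO.eprod {e f : Elem QA n} (he : InPathsO A B (some e))
    (hf : InPathsO A B (some f)) (h : e.q = f.p) : InPathsO A B (some (eprod e f)) :=
  omulO_some_some h ▸ InPathsO.mul _ _ he hf

theorem InAsympO.eprod {e f : Elem QA n} (he : InAsympO A B (some e))
    (hf : InAsympO A B (some f)) (h : e.q = f.p) : InAsympO A B (some (eprod e f)) :=
  omulO_some_some h ▸ InAsympO.mul _ _ he hf

theorem InPathsO.inAsympO {x : Option (Elem QA n)} (h : InPathsO A B x) : InAsympO A B x := by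
  induction h with
  | gen e he => exact InAsympO.gen e he
  | mul x y _ _ ihx ihy => exact InAsympO.mul x y ihx ihy

theorem InPathsO.isBarred {e : Elem QA n} (h : InPathsO A B (some e)) : e.IsBarred := by
  generalize hx : some e = x at h
  induction h generalizing e with
  | gen e' he' => cases hx; exact he'.isBarred
  | mul x y _ _ ihx ihy =>
    match x, y with
    | some a, some b =>
      by_cases hab : a.q = b.p
      · rw [omulO_some_some hab, Option.some_inj] at hx
        exact hx ▸ (ihx rfl).eprod (ihy rfl)
      · simp [omulO, hab] at hx
    | none, _ => simp [omulO] at hx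
    | some _, none => simp [omulO] at hx

end Elements

section WitnessLift

variable {Sigma QA : Type} {n : ℕ} [DecidableEq QA] {A : MPA Sigma QA} {B : MPA Sigma (Fin n)}
  {C : Set (Fin n × Fin n)} {α α' β : Elem QA n}

structure IsWitnessLift (A : MPA Sigma QA) (B : MPA Sigma (Fin n)) (C : Set (Fin n × Fin n))
    (α β : Elem QA n) : Prop where
  ebar_eq : ebar β = α
  x_eq : β.x = OSR.inf
  le_one : ∀ ij ∈ C, β.M ij.1 ij.2 ≤ OSR.one
  mem : InAsympO A B (some β)

namespace IsWitnessLift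

theorem p_eq (h : IsWitnessLift A B C α β) : β.p = α.p := (congrArg Elem.p h.ebar_eq :)

theorem q_eq (h : IsWitnessLift A B C α β) : β.q = α.q := (congrArg Elem.q h.ebar_eq :)

theorem obar_M (h : IsWitnessLift A B C α β) : obar β.M = α.M := congrArg Elem.M h.ebar_eq

theorem eprod_right (h : IsWitnessLift A B (leftContrib C α.M α'.M) α β)
    (hα' : InPathsO A B (some α')) (hq : α.q = α'.p) :
    IsWitnessLift A B C (eprod α α') (eprod β α') where
  ebar_eq := by rw [ebar_eprod, h.ebar_eq, hα'.isBarred.ebar_eq]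
  x_eq := by simp only [eprod, h.x_eq, OSR.inf_add hα'.isBarred.x_ne_bot]
  le_one := omul_le_one_of_leftContrib h.obar_M hα'.isBarred.obar_M h.le_one
  mem := h.mem.eprod hα'.inAsympO (h.q_eq.trans hq)

theorem eprod_left (h : IsWitnessLift A B (rightContrib C α'.M α.M) α β)
    (hα' : InPathsO A B (some α')) (hq : α'.q = α.p) :
    IsWitnessLift A B C (eprod α' α) (eprod α' β) where
  ebar_eq := by rw [ebar_eprod, h.ebar_eq, hα'.isBarred.ebar_eq]
  x_eq := by simp only [eprod, h.x_eq, OSR.add_inf hα'.isBarred.x_ne_bot]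
  le_one := omul_le_one_of_rightContrib h.obar_M hα'.isBarred.obar_M h.le_one
  mem := hα'.inAsympO.eprod h.mem (hq.trans h.p_eq.symm)

theorem eflat (h : IsWitnessLift A B (midContrib C α.M) α β) (hpq : α.p = α.q)
    (hidem : omul α.M α.M = α.M) : IsWitnessLift A B C α (_root_.eflat β) where
  ebar_eq := by
    have hM : obar (mflat β.M) = α.M := by rw [obar_mflat (by rw [h.obar_M, hidem]), h.obar_M]
    obtain ⟨p, x, q, M⟩ := α
    simp only [ebar, _root_.eflat, Elem.mk.injEq]
    exact ⟨h.p_eq, congrArg Elem.x h.ebar_eq, h.p_eq.trans hpq, hM⟩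
  x_eq := h.x_eq
  le_one := mflat_le_one h.obar_M hidem h.le_one
  mem := InAsympO.flat β h.mem ⟨h.p_eq.trans (hpq.trans h.q_eq.symm), by rw [h.obar_M, hidem]⟩

theorem isWitness (h : IsWitnessLift A B
      {ij | B.I ij.1 ≠ ⊥ ∧ B.F ij.2 ≠ ⊥ ∧ α.M ij.1 ij.2 ≠ OSR.bot} α β)
    (hI : A.I α.p ≠ ⊥) (hF : A.F α.q ≠ ⊥) : IsWitness A B β := by
  refine ⟨h.p_eq ▸ hI, h.q_eq ▸ hF, h.x_eq,
    OSR.ne_inf_of_le_one (osum_le fun i => osum_le fun j => ?_)⟩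
  exact OSR.add_add_le_one (OSR.le_one_of_bar_eq (barW_bar _))
    (OSR.le_one_of_bar_eq (barW_bar _)) fun hi hM hj => h.le_one (i, j)
      ⟨barW_ne_bot_iff.1 hi, barW_ne_bot_iff.1 hj, (ne_bot_iff_of_obar_eq h.obar_M).1 hM⟩

end IsWitnessLift

theorem isWitnessLift_estab (hα : InPathsO A B (some α)) (hpq : α.p = α.q)
    (hidem : omul α.M α.M = α.M) (hx : α.x = OSR.one)
    (hz : ∀ ij ∈ midContrib C α.M, α.M ij.1 ij.2 = OSR.zero) :
    IsWitnessLift A B C α (estab α) where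
  ebar_eq := by
    have hM : obar (mstab α.M) = α.M := by
      rw [obar_mstab (by rw [hα.isBarred.obar_M, hidem]), hα.isBarred.obar_M]
    obtain ⟨p, x, q, M⟩ := α
    simp only at hpq hx hM
    simp only [ebar, estab, hx, hpq, hM]
    rfl
  x_eq := by simp only [estab, hx]; rfl
  le_one := mstab_le_one hα.isBarred.obar_M hz
  mem := InAsympO.stab α hα.inAsympO ⟨hpq, by rw [hα.isBarred.obar_M, hidem]⟩

end WitnessLift

namespace FT

variable {QA : Type} {n : ℕ}

theorem mem_leaves_node {lbl : Elem QA n} {cs : List (FT QA n)} {c : FT QA n} {e : Elem QA n}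
    (hc : c ∈ cs) (he : e ∈ c.leaves) : e ∈ (node lbl cs).leaves := by
  show e ∈ leavesList cs
  induction cs with
  | nil => cases hc
  | cons c' cs ih =>
    rcases List.mem_cons.1 hc with rfl | hc
    · exact List.mem_append_left _ he
    · exact List.mem_append_right _ (ih hc)

theorem subtreeAt_cons_eq_some {t c : FT QA n} {i : ℕ} {σ : List ℕ} :
    t.subtreeAt (i :: σ) = some c ↔
      ∃ lbl cs c', t = node lbl cs ∧ cs[i]? = some c' ∧ c'.subtreeAt σ = some c := by
  cases t with
  | leaf e => simp [subtreeAt, childAt]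
  | node lbl cs => simp [subtreeAt, childAt, Option.bind_eq_some_iff]

theorem WF.child {lbl : Elem QA n} {cs : List (FT QA n)} {c : FT QA n}
    (h : (FT.node lbl cs).WF) (hc : c ∈ cs) : c.WF := by
  cases h with
  | node _ _ _ hcs _ _ _ => exact hcs c hc

theorem WF.two_le_length {lbl : Elem QA n} {cs : List (FT QA n)} (h : (FT.node lbl cs).WF) :
    2 ≤ cs.length := by
  cases h with
  | node _ _ h2 _ _ _ _ => exact h2

theorem WF.pair {lbl : Elem QA n} {c₁ c₂ : FT QA n} (h : (FT.node lbl [c₁, c₂]).WF) :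
    lbl = eprod c₁.label c₂.label ∧ c₁.label.q = c₂.label.p := by
  cases h with
  | node _ _ _ _ hchain hfold _ =>
    exact ⟨hfold _ _ rfl, (List.isChain_cons_cons.1 hchain).1⟩

theorem WF.idem {lbl : Elem QA n} {cs : List (FT QA n)} (h : (FT.node lbl cs).WF)
    (h3 : 3 ≤ cs.length) :
    lbl.p = lbl.q ∧ eprod lbl lbl = lbl ∧ ∀ c ∈ cs, c.label = lbl := by
  cases h with
  | node _ _ _ _ _ _ hidem => exact hidem h3

theorem WF.subtreeAt {t c : FT QA n} : ∀ {σ : List ℕ}, t.WF → t.subtreeAt σ = some c → c.WF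
  | [], ht, hc => by cases hc; exact ht
  | _ :: _, ht, hc => by
    obtain ⟨lbl, cs, c', rfl, hc', hsub⟩ := subtreeAt_cons_eq_some.1 hc
    exact (ht.child (List.mem_of_getElem? hc')).subtreeAt hsub

theorem leaves_subset_of_subtreeAt {t c : FT QA n} :
    ∀ {σ : List ℕ}, t.subtreeAt σ = some c → ∀ e ∈ c.leaves, e ∈ t.leaves
  | [], hc, e, he => by cases hc; exact he
  | _ :: _, hc, e, he => by
    obtain ⟨lbl, cs, c', rfl, hc', hsub⟩ := subtreeAt_cons_eq_some.1 hc
    exact mem_leaves_node (List.mem_of_getElem? hc') (leaves_subset_of_subtreeAt hsub e he)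

end FT

section Labels

variable {Sigma QA : Type} {n : ℕ}

inductive IsRun : QA → List (Elem QA n) → QA → Prop
  | nil (p : QA) : IsRun p [] p
  | cons {p q : QA} {e : Elem QA n} {l : List (Elem QA n)} :
      e.p = p → IsRun e.q l q → IsRun p (e :: l) q

theorem IsRun.of_append {p q : QA} :
    ∀ {l₁ l₂ : List (Elem QA n)}, IsRun p (l₁ ++ l₂) q → ∃ r, IsRun p l₁ r ∧ IsRun r l₂ q
  | [], _, h => ⟨p, IsRun.nil p, h⟩
  | _ :: _, _, IsRun.cons hp h =>
    let ⟨r, h₁, h₂⟩ := IsRun.of_append h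
    ⟨r, IsRun.cons hp h₁, h₂⟩

theorem IsRun.foldl_eprod {p q : QA} :
    ∀ {h : Elem QA n} {l : List (Elem QA n)}, IsRun p (h :: l) q →
      (l.foldl eprod h).p = p ∧ (l.foldl eprod h).q = q
  | _, [], IsRun.cons hp (IsRun.nil _) => ⟨hp, rfl⟩
  | h, e :: _, IsRun.cons hp (IsRun.cons _ hl) =>
    IsRun.foldl_eprod (h := eprod h e) (IsRun.cons hp hl)

theorem FT.WF.label_endpoints_of_isRun {t : FT QA n} (ht : t.WF) {p q : QA}
    (hrun : IsRun p t.leaves q) : t.label.p = p ∧ t.label.q = q := by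
  induction ht generalizing p q with
  | leaf e =>
    obtain _ | ⟨hp, ⟨⟩⟩ := hrun
    exact ⟨hp, rfl⟩
  | node lbl cs h2 _ _ hfold _ ih =>
    have hlabels : ∀ {cs' : List (FT QA n)} {p}, (∀ c ∈ cs', c ∈ cs) →
        IsRun p (FT.leavesList cs') q → IsRun p (cs'.map FT.label) q := by
      intro cs'
      induction cs' with
      | nil => intro p _ h; exact h
      | cons c cs' ihcs =>
        intro p hsub h
        obtain ⟨r, hc, hcs'⟩ := IsRun.of_append h
        obtain ⟨hp, hq⟩ := ih c (hsub c List.mem_cons_self) hc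
        exact IsRun.cons hp (hq ▸ ihcs (fun c hc => hsub c (List.mem_cons_of_mem _ hc)) hcs')
    obtain ⟨c, cs', rfl⟩ := List.exists_cons_of_length_pos (by omega : 0 < cs.length)
    rw [hfold c.label (cs'.map FT.label) rfl]
    exact IsRun.foldl_eprod (hlabels (fun _ h => h) hrun)

theorem PathLeaves.isRun {A : MPA Sigma QA} {B : MPA Sigma (Fin n)} :
    ∀ {p : QA} {w : List Sigma} {xs : List ℕ} {ls : List (Elem QA n)} {q : QA},
      PathLeaves A B p w xs ls q → IsRun p ls q
  | _, [], [], [], _, h => h ▸ IsRun.nil _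
  | _, _ :: _, _ :: _, _ :: _, _, ⟨hp, _, _, _, h⟩ => IsRun.cons hp (PathLeaves.isRun h)
  | _, [], [], _ :: _, _, h => h.elim
  | _, [], _ :: _, _, _, h => h.elim
  | _, _ :: _, [], _, _, h => h.elim
  | _, _ :: _, _ :: _, [], _, h => h.elim

theorem PathLeaves.isGen {A : MPA Sigma QA} {B : MPA Sigma (Fin n)} :
    ∀ {p : QA} {w : List Sigma} {xs : List ℕ} {ls : List (Elem QA n)} {q : QA},
      PathLeaves A B p w xs ls q → ∀ e ∈ ls, IsGen A B e
  | _, a :: _, x :: _, ⟨ep, ex, eq, eM⟩ :: _, _, ⟨hp, hM, hx, hMe, h⟩, e, he => by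
    rcases List.mem_cons.1 he with rfl | he
    · simp only at hp hM hx hMe
      exact ⟨a, _, eq, x, hp ▸ hM, by rw [hp, hx, hMe]⟩
    · exact PathLeaves.isGen h e he
  | _, [], [], [], _, _, _, he => by cases he
  | _, [], [], _ :: _, _, h, _, _ => h.elim
  | _, [], _ :: _, _, _, h, _, _ => h.elim
  | _, _ :: _, [], _, _, h, _, _ => h.elim
  | _, _ :: _, _ :: _, [], _, h, _, _ => h.elim

variable [DecidableEq QA] {A : MPA Sigma QA} {B : MPA Sigma (Fin n)}

theorem foldl_eprod_mem_paths : ∀ {h : Elem QA n} {l : List (Elem QA n)},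
    List.IsChain (fun a b => a.q = b.p) (h :: l) → (∀ e ∈ h :: l, InPathsO A B (some e)) →
      InPathsO A B (some (l.foldl eprod h))
  | _, [], _, hmem => hmem _ List.mem_cons_self
  | h, e :: l, hchain, hmem => by
    obtain ⟨hhe, hel⟩ := List.isChain_cons_cons.1 hchain
    refine foldl_eprod_mem_paths (h := eprod h e) ?_ fun x hx => ?_
    · cases l with
      | nil => exact List.isChain_singleton _
      | cons b l => exact List.isChain_cons_cons.2 (List.isChain_cons_cons.1 hel)
    · rcases List.mem_cons.1 hx with rfl | hx
      · exact (hmem h List.mem_cons_self).eprod (hmem e (by simp)) hhe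
      · exact hmem x (by simp [hx])

theorem FT.WF.label_mem_paths {t : FT QA n} (ht : t.WF) (hgen : ∀ e ∈ t.leaves, IsGen A B e) :
    InPathsO A B (some t.label) := by
  induction ht with
  | leaf e => exact InPathsO.gen e (hgen e List.mem_cons_self)
  | node lbl cs h2 _ hchain hfold _ ih =>
    obtain ⟨c, cs', rfl⟩ := List.exists_cons_of_length_pos (by omega : 0 < cs.length)
    rw [hfold c.label (cs'.map FT.label) rfl]
    refine foldl_eprod_mem_paths hchain fun e he => ?_
    obtain ⟨c'', hc'', rfl⟩ := List.mem_map.1 (List.map_cons ▸ he)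
    exact ih c'' hc'' fun e he => hgen e (FT.mem_leaves_node hc'' he)

end Labels

section Faults

variable {QA : Type} {n : ℕ}

theorem contribAt_nil (t : FT QA n) (C : Set (Fin n × Fin n)) : contribAt t C [] = C := by
  cases t <;> rfl

theorem contribAt_node_cons {lbl : Elem QA n} {cs : List (FT QA n)} {i : ℕ} {c : FT QA n}
    (hc : cs[i]? = some c) (C : Set (Fin n × Fin n)) (τ : List ℕ) :
    contribAt (FT.node lbl cs) C (i :: τ) = contribAt c (contribStep cs C i) τ := by
  simp [contribAt, hc]

theorem contribStep_of_three_le {lbl : Elem QA n} {cs : List (FT QA n)} (h3 : 3 ≤ cs.length)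
    (hlab : ∀ c ∈ cs, c.label = lbl) (C : Set (Fin n × Fin n)) (i : ℕ) :
    contribStep cs C i =
      if i = 0 then leftContrib C lbl.M lbl.M
      else if i = cs.length - 1 then rightContrib C lbl.M lbl.M
      else midContrib C lbl.M := by
  obtain ⟨c₁, c₂, c₃, cs, rfl⟩ : ∃ c₁ c₂ c₃ cs', cs = c₁ :: c₂ :: c₃ :: cs' := by
    match cs, h3 with
    | c₁ :: c₂ :: c₃ :: cs', _ => exact ⟨c₁, c₂, c₃, cs', rfl⟩
  simp only [contribStep, hlab c₁ List.mem_cons_self]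
  rfl

/-- `IsFaultAt` relative to a subtree `t` whose root has contributor set `C`. -/
def IsFaultFrom (t : FT QA n) (C : Set (Fin n × Fin n)) (π : List ℕ) : Prop :=
  ∃ σ i, π = σ ++ [i] ∧
    ∃ lbl cs, FT.subtreeAt t σ = some (FT.node lbl cs) ∧ 3 ≤ cs.length ∧
      0 < i ∧ i < cs.length - 1 ∧
      ∃ c, cs[i]? = some c ∧ (FT.label c).x = OSR.one ∧
        ∀ ij ∈ contribAt t C π, (FT.label c).M ij.1 ij.2 = OSR.zero

namespace IsFaultFrom

variable {t : FT QA n} {C : Set (Fin n × Fin n)}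

theorem ne_nil {π : List ℕ} (h : IsFaultFrom t C π) : π ≠ [] := by
  obtain ⟨σ, i, rfl, -⟩ := h
  simp

theorem exists_node {π : List ℕ} (h : IsFaultFrom t C π) : ∃ lbl cs, t = FT.node lbl cs := by
  obtain ⟨_ | ⟨i, σ⟩, -, -, lbl, cs, hsub, -⟩ := h
  · exact ⟨lbl, cs, Option.some_inj.1 hsub⟩
  · obtain ⟨lbl', cs', -, rfl, -⟩ := FT.subtreeAt_cons_eq_some.1 hsub
    exact ⟨lbl', cs', rfl⟩

theorem descend {lbl : Elem QA n} {cs : List (FT QA n)} {i : ℕ} {τ : List ℕ}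
    (h : IsFaultFrom (FT.node lbl cs) C (i :: τ)) (hτ : τ ≠ []) :
    ∃ c, cs[i]? = some c ∧ IsFaultFrom c (contribStep cs C i) τ := by
  obtain ⟨σ, k, hσ, lbl', cs', hsub, hrest⟩ := h
  obtain ⟨σ, rfl, rfl⟩ : ∃ σ', σ = i :: σ' ∧ τ = σ' ++ [k] := by
    cases σ with
    | nil => exact absurd (List.cons_eq_cons.1 hσ).2 hτ
    | cons i' σ' => exact ⟨σ', by simpa [eq_comm] using hσ⟩
  obtain ⟨_, _, c, hnode, hc, hsub⟩ := FT.subtreeAt_cons_eq_some.1 hsub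
  cases hnode
  refine ⟨c, hc, σ, k, rfl, lbl', cs', hsub, ?_⟩
  rwa [contribAt_node_cons hc] at hrest

theorem of_append {c : FT QA n} :
    ∀ {t : FT QA n} {C : Set (Fin n × Fin n)} {σ τ : List ℕ}, IsFaultFrom t C (σ ++ τ) →
      τ ≠ [] → t.subtreeAt σ = some c → IsFaultFrom c (contribAt t C σ) τ
  | _, _, [], _, h, _, hc => by
    cases hc
    rwa [contribAt_nil]
  | _, _, i :: σ, τ, h, hτ, hc => by
    obtain ⟨lbl, cs, c', rfl, hc', hsub⟩ := FT.subtreeAt_cons_eq_some.1 hc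
    obtain ⟨c'', hc'', h'⟩ := h.descend (by simp [hτ])
    cases hc'.symm.trans hc''
    rw [contribAt_node_cons hc']
    exact IsFaultFrom.of_append h' hτ hsub

end IsFaultFrom

end Faults

section Beta

variable {Sigma QA : Type} {n : ℕ}

theorem beta_singleton {lbl : Elem QA n} {cs : List (FT QA n)} {i : ℕ} {c : FT QA n}
    (hc : cs[i]? = some c) : beta (FT.node lbl cs) [i] = estab c.label := by
  simp [beta, hc]

theorem beta_of_three_le {lbl : Elem QA n} {cs : List (FT QA n)} {i j : ℕ} {τ : List ℕ}
    {c : FT QA n} (h3 : 3 ≤ cs.length) (hc : cs[i]? = some c) :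
    beta (FT.node lbl cs) (i :: j :: τ) =
      if i = 0 then eprod (beta c (j :: τ)) c.label
      else if i = cs.length - 1 then eprod c.label (beta c (j :: τ))
      else eflat (beta c (j :: τ)) := by
  simp [beta, hc, show cs.length ≠ 2 by omega]

variable [DecidableEq QA] {A : MPA Sigma QA} {B : MPA Sigma (Fin n)}
  {lbl : Elem QA n} {cs : List (FT QA n)} {C : Set (Fin n × Fin n)}

theorem FT.WF.children_mem_paths (hwf : (FT.node lbl cs).WF)
    (hgen : ∀ e ∈ (FT.node lbl cs).leaves, IsGen A B e) :
    ∀ c ∈ cs, InPathsO A B (some c.label) := fun _ hc =>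
  (hwf.child hc).label_mem_paths fun e he => hgen e (FT.mem_leaves_node hc he)

theorem isWitnessLift_beta_singleton (hwf : (FT.node lbl cs).WF)
    (hcs : ∀ c ∈ cs, InPathsO A B (some c.label)) {i : ℕ}
    (hf : IsFaultFrom (FT.node lbl cs) C [i]) :
    IsWitnessLift A B C lbl (beta (FT.node lbl cs) [i]) := by
  obtain ⟨σ, k, hσ, lbl', cs', hsub, h3, hk0, hk, c, hc, hx, hz⟩ := hf
  obtain ⟨rfl, rfl⟩ : σ = [] ∧ k = i := by
    cases σ with
    | nil => simpa [eq_comm] using hσ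
    | cons => simp at hσ
  cases hsub
  obtain ⟨hpq, hprod, hlab⟩ := hwf.idem h3
  have hcl : c.label = lbl := hlab c (List.mem_of_getElem? hc)
  rw [contribAt_node_cons hc, contribAt_nil, contribStep_of_three_le h3 hlab,
    if_neg (by omega), if_neg (by omega), hcl] at hz
  rw [beta_singleton hc, hcl]
  exact isWitnessLift_estab (hcl ▸ hcs c (List.mem_of_getElem? hc)) hpq
    (congrArg Elem.M hprod) (hcl ▸ hx) hz

theorem IsWitnessLift.beta_node (hwf : (FT.node lbl cs).WF)
    (hcs : ∀ c ∈ cs, InPathsO A B (some c.label)) {i j : ℕ} {τ : List ℕ} {c : FT QA n}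
    (hc : cs[i]? = some c) (h : IsWitnessLift A B (contribStep cs C i) c.label (beta c (j :: τ))) :
    IsWitnessLift A B C lbl (beta (FT.node lbl cs) (i :: j :: τ)) := by
  by_cases h2 : cs.length = 2
  · obtain ⟨c₁, c₂, rfl⟩ := List.length_eq_two.1 h2
    obtain ⟨hlbl, hq⟩ := hwf.pair
    rw [hlbl]
    match i, hc with
    | 0, hc =>
      cases Option.some_inj.1 hc
      exact h.eprod_right (hcs c₂ (by simp)) hq
    | 1, hc =>
      cases Option.some_inj.1 hc
      exact h.eprod_left (hcs c₁ (by simp)) hq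
  · have h3 : 3 ≤ cs.length := by have := hwf.two_le_length; omega
    obtain ⟨hpq, hprod, hlab⟩ := hwf.idem h3
    have hcl : c.label = lbl := hlab c (List.mem_of_getElem? hc)
    have hlbl : InPathsO A B (some lbl) := hcl ▸ hcs c (List.mem_of_getElem? hc)
    rw [contribStep_of_three_le h3 hlab, hcl] at h
    rw [beta_of_three_le h3 hc, hcl]
    split_ifs at h ⊢
    · simpa only [hprod] using h.eprod_right hlbl hpq.symm
    · simpa only [hprod] using h.eprod_left hlbl hpq.symm
    · exact h.eflat hpq (congrArg Elem.M hprod)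

theorem isWitnessLift_beta : ∀ {τ : List ℕ} {t : FT QA n} {C : Set (Fin n × Fin n)},
    τ ≠ [] → t.WF → (∀ e ∈ t.leaves, IsGen A B e) → IsFaultFrom t C τ →
      IsWitnessLift A B C t.label (beta t τ)
  | [], _, _, hτ, _, _, _ => absurd rfl hτ
  | [_], _, _, _, hwf, hgen, hf => by
    obtain ⟨lbl, cs, rfl⟩ := hf.exists_node
    exact isWitnessLift_beta_singleton hwf (hwf.children_mem_paths hgen) hf
  | _ :: j :: τ, _, _, _, hwf, hgen, hf => by
    obtain ⟨lbl, cs, rfl⟩ := hf.exists_node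
    obtain ⟨c, hc, hf'⟩ := hf.descend (List.cons_ne_nil j τ)
    have hmem := List.mem_of_getElem? hc
    exact IsWitnessLift.beta_node hwf (hwf.children_mem_paths hgen) hc
      (isWitnessLift_beta (List.cons_ne_nil j τ) (hwf.child hmem)
        (fun e he => hgen e (FT.mem_leaves_node hmem he)) hf')

end Beta

/-- properties of the β-labelling along the path from a fault of maximal height
to the root: for every strict ancestor `ν_h` (`h ∈ {2,…,m}`) of the fault,
`bar(β(ν_h)) = α(ν_h)`, the `x`-component of `β(ν_h)` is `∞` and its matrix is at most `1` on
all contributors; in particular the β-label of the root is a witness of non-domination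
in `I_{A,B}`. -/
theorem beta_labelling_witness {Sigma QA : Type} [Fintype Sigma] [Fintype QA] [DecidableEq QA]
    {nB : ℕ} (A : MPA Sigma QA) (B : MPA Sigma (Fin nB))
    (hdet : A.Deterministic) (hB : ∀ v : List Sigma, B.func v ≠ ⊥)
    (w : List Sigma) (t : FT QA nB) (ht : IsFactTreeOn A B w t)
    (π : List ℕ) (hfault : IsFaultAt B t π)
    (hmax : ∀ π' : List ℕ, IsFaultAt B t π' → heightAt t π' ≤ heightAt t π) :
    (∀ σ τ : List ℕ, π = σ ++ τ → τ ≠ [] →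
      ∀ c : FT QA nB, FT.subtreeAt t σ = some c →
        ebar (beta c τ) = FT.label c ∧ (beta c τ).x = OSR.inf ∧
        ∀ ij ∈ contributors B t σ, (beta c τ).M ij.1 ij.2 ≤ OSR.one) ∧
    InAsympO A B (some (beta t π)) ∧ IsWitness A B (beta t π) := by
  obtain ⟨hwf, p, q, xs, hI, hF, hleaves⟩ := ht
  have hlift : ∀ σ τ, π = σ ++ τ → τ ≠ [] → ∀ c, t.subtreeAt σ = some c →
      IsWitnessLift A B (contributors B t σ) c.label (beta c τ) := by
    rintro σ τ rfl hτ c hc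
    exact isWitnessLift_beta hτ (hwf.subtreeAt hc)
      (fun e he => hleaves.isGen e (FT.leaves_subset_of_subtreeAt hc e he))
      (IsFaultFrom.of_append hfault hτ hc)
  have hroot := hlift [] π rfl (IsFaultFrom.ne_nil hfault) t rfl
  rw [contributors, contribAt_nil] at hroot
  obtain ⟨hp, hq⟩ := hwf.label_endpoints_of_isRun hleaves.isRun
  refine ⟨fun σ τ hπ hτ c hc => ?_, hroot.mem, hroot.isWitness (hp ▸ hI) (hq ▸ hF)⟩
  obtain ⟨hbar, hx, hle, -⟩ := hlift σ τ hπ hτ c hc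
  exact ⟨hbar, hx, hle⟩
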